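/- arXiv:1207.1113 — 2 statements merged into one kernel-verified Lean document; each statement's English description precedes it below -/
import Mathlib

section
/- Let θ : [0,∞) → ℝ be differentiable and satisfy the Raychaudhuri-type equation θ'(t) + (1/(n-2)) θ(t)² = f(t) for all t ≥ 0, where n ≥ 3 is an integer, f : [0,∞) → ℝ is continuous with f(t) ≤ 0 for all t, and θ(0) ≤ 0. If limsup_{s→∞} ( θ(s) + (1/(n-2)) ∫₀ˢ θ(t)² dt ) ≥ 0, then θ ≡ 0 and f ≡ 0 on [0,∞). -/
/-!
Along a solution of `θ' ≤ -c θ²` with `c > 0`, the quantity `1/θ - c t` is nondecreasing wherever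
`θ < 0`, so a negative value `θ(a)` forces `θ` to reach `-∞` before time `a - 1/(c θ(a))`.
A solution defined on all of `[0, ∞)` is therefore nonnegative; since `θ' ≤ 0` and `θ(0) ≤ 0`
it is also nonpositive, hence `θ ≡ 0`, `θ' ≡ 0`, and the equation gives `f ≡ 0`.
-/

open Set

section IciDerivative

variable {g g' : ℝ → ℝ} {a : ℝ}

lemma monotoneOn_Ici_of_hasDerivAt_nonneg (hg : ∀ t, a ≤ t → HasDerivAt g (g' t) t)
    (hg' : ∀ t, a ≤ t → 0 ≤ g' t) : MonotoneOn g (Ici a) :=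
  monotoneOn_of_hasDerivWithinAt_nonneg (convex_Ici a)
    (fun t ht => (hg t ht).continuousAt.continuousWithinAt)
    (fun t ht => (hg t (interior_subset ht)).hasDerivWithinAt)
    (fun t ht => hg' t (interior_subset ht))

lemma antitoneOn_Ici_of_hasDerivAt_nonpos (hg : ∀ t, a ≤ t → HasDerivAt g (g' t) t)
    (hg' : ∀ t, a ≤ t → g' t ≤ 0) : AntitoneOn g (Ici a) :=
  antitoneOn_of_hasDerivWithinAt_nonpos (convex_Ici a)
    (fun t ht => (hg t ht).continuousAt.continuousWithinAt)
    (fun t ht => (hg t (interior_subset ht)).hasDerivWithinAt)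
    (fun t ht => hg' t (interior_subset ht))

lemma HasDerivAt.eq_zero_of_forall_Ici_eq_zero {t d : ℝ} (h : HasDerivAt g d t) (ht : a ≤ t)
    (hg : ∀ s, a ≤ s → g s = 0) : d = 0 :=
  (uniqueDiffOn_Ici a t ht).eq_deriv _ h.hasDerivWithinAt
    ((hasDerivWithinAt_const t _ 0).congr (fun s hs => hg s hs) (hg t ht))

end IciDerivative

lemma riccati_nonneg_of_forall_ge {c a : ℝ} (hc : 0 < c) {θ θ' : ℝ → ℝ}
    (hθ : ∀ t, a ≤ t → HasDerivAt θ (θ' t) t) (hric : ∀ t, a ≤ t → θ' t + c * θ t ^ 2 ≤ 0) :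
    0 ≤ θ a := by
  by_contra! ha
  have hθ'_nonpos : ∀ t, a ≤ t → θ' t ≤ 0 := fun t ht => by
    nlinarith [hric t ht, mul_nonneg hc.le (sq_nonneg (θ t))]
  have hneg : ∀ t, a ≤ t → θ t < 0 := fun t ht =>
    (antitoneOn_Ici_of_hasDerivAt_nonpos hθ hθ'_nonpos self_mem_Ici ht ht).trans_lt ha
  have hmono : MonotoneOn (fun t => (θ t)⁻¹ - c * t) (Ici a) := by
    refine monotoneOn_Ici_of_hasDerivAt_nonneg (g' := fun t => -θ' t / θ t ^ 2 - c)
      (fun t ht => ?_) (fun t ht => ?_)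
    · simpa using ((hθ t ht).fun_inv (hneg t ht).ne).fun_sub ((hasDerivAt_id' t).const_mul c)
    · have hθt := (hneg t ht).ne
      have hderiv : -θ' t / θ t ^ 2 - c = -(θ' t + c * θ t ^ 2) / θ t ^ 2 := by
        field_simp; ring
      simp only [hderiv]
      exact div_nonneg (neg_nonneg.mpr (hric t ht)) (sq_nonneg _)
  set T := a - (θ a)⁻¹ / c
  have hT : a ≤ T := by
    have : (θ a)⁻¹ / c < 0 := div_neg_of_neg_of_pos (inv_lt_zero.mpr ha) hc
    linarith
  have hcT : c * T = c * a - (θ a)⁻¹ := by simp only [T]; field_simp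
  have hwT := hmono self_mem_Ici hT hT
  simp only [hcT] at hwT
  linarith [inv_lt_zero.mpr (hneg T hT)]

theorem raychaudhuri_limsup_forces_vanishing_general
    (n : ℕ) (hn : 3 ≤ n)
    (θ θ' f : ℝ → ℝ)
    (hθ : ∀ t, 0 ≤ t → HasDerivAt θ (θ' t) t)
    (hf_nonpos : ∀ t, 0 ≤ t → f t ≤ 0)
    (heq : ∀ t, 0 ≤ t → θ' t + (1 / ((n : ℝ) - 2)) * (θ t) ^ 2 = f t)
    (hθ0 : θ 0 ≤ 0) :
    (∀ t, 0 ≤ t → θ t = 0) ∧ (∀ t, 0 ≤ t → f t = 0) := by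
  set c : ℝ := 1 / ((n : ℝ) - 2)
  have hc : 0 < c := by
    have : (3 : ℝ) ≤ n := by exact_mod_cast hn
    exact one_div_pos.mpr (by linarith)
  have hric : ∀ t, 0 ≤ t → θ' t + c * θ t ^ 2 ≤ 0 := fun t ht =>
    (heq t ht).trans_le (hf_nonpos t ht)
  have hθ'_nonpos : ∀ t, 0 ≤ t → θ' t ≤ 0 := fun t ht => by
    nlinarith [hric t ht, mul_nonneg hc.le (sq_nonneg (θ t))]
  have hθ_zero : ∀ t, 0 ≤ t → θ t = 0 := fun t ht =>
    le_antisymm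
      ((antitoneOn_Ici_of_hasDerivAt_nonpos hθ hθ'_nonpos self_mem_Ici ht ht).trans hθ0)
      (riccati_nonneg_of_forall_ge hc (fun s hs => hθ s (ht.trans hs))
        (fun s hs => hric s (ht.trans hs)))
  refine ⟨hθ_zero, fun t ht => ?_⟩
  rw [← heq t ht, (hθ t ht).eq_zero_of_forall_Ici_eq_zero ht hθ_zero, hθ_zero t ht]
  ring

/-- Analytic core of the singularity theorem: traced Riccati (Raychaudhuri)
equation along a complete null Σ-ray. -/
theorem raychaudhuri_limsup_forces_vanishing
    (n : ℕ) (hn : 3 ≤ n)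
    (θ θ' f : ℝ → ℝ)
    (hθ : ∀ t, 0 ≤ t → HasDerivAt θ (θ' t) t)
    (hf_cont : ContinuousOn f (Set.Ici 0))
    (hf_nonpos : ∀ t, 0 ≤ t → f t ≤ 0)
    (heq : ∀ t, 0 ≤ t → θ' t + (1 / ((n : ℝ) - 2)) * (θ t) ^ 2 = f t)
    (hθ0 : θ 0 ≤ 0)
    (hlimsup :
      0 ≤ Filter.limsup
        (fun s => θ s + (1 / ((n : ℝ) - 2)) * ∫ t in (0:ℝ)..s, (θ t) ^ 2)
        Filter.atTop) :
    (∀ t, 0 ≤ t → θ t = 0) ∧ (∀ t, 0 ≤ t → f t = 0) :=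
  raychaudhuri_limsup_forces_vanishing_general n hn θ θ' f hθ hf_nonpos heq hθ0
end

section
/- Let θ : [0,∞) → ℝ be continuously differentiable with θ' + c θ² ≤ 0 for some constant c > 0 and θ(0) = 0. Suppose additionally θ'(t₀) < 0 at some t₀ ≥ 0. Then θ(t) < 0 for all t > t₀, and θ blows up to -∞ in finite time, contradicting existence on [0,∞). -/
/-!
From `θ' ≤ -c θ² ≤ 0`, `θ` is nonincreasing, and `θ'(t₀) < 0` makes it drop strictly below
`θ(t₀) ≤ θ(0) = 0` right after `t₀`, so `θ < 0` on `(t₀, ∞)`. Where `θ < 0`, the function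
`1/θ - c t` has derivative `-θ'/θ² - c ≥ 0`, hence `1/θ(t) ≥ 1/θ(a) + c (t - a)` for `t ≥ a > t₀`.
The right-hand side reaches `0` at a finite time, while `1/θ` stays negative.
-/

open Set

def IsRiccatiSubsolution (c : ℝ) (f f' : ℝ → ℝ) (D : Set ℝ) : Prop :=
  ∀ t ∈ D, HasDerivAt f (f' t) t ∧ f' t + c * f t ^ 2 ≤ 0

lemma monotoneOn_of_forall_hasDerivAt_nonneg {D : Set ℝ} (hD : Convex ℝ D) {f f' : ℝ → ℝ}
    (hf : ∀ x ∈ D, HasDerivAt f (f' x) x) (hf' : ∀ x ∈ D, 0 ≤ f' x) : MonotoneOn f D :=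
  monotoneOn_of_hasDerivWithinAt_nonneg hD
    (fun x hx ↦ (hf x hx).continuousAt.continuousWithinAt)
    (fun x hx ↦ (hf x (interior_subset hx)).hasDerivWithinAt)
    (fun x hx ↦ hf' x (interior_subset hx))

lemma antitoneOn_of_forall_hasDerivAt_nonpos {D : Set ℝ} (hD : Convex ℝ D) {f f' : ℝ → ℝ}
    (hf : ∀ x ∈ D, HasDerivAt f (f' x) x) (hf' : ∀ x ∈ D, f' x ≤ 0) : AntitoneOn f D :=
  antitoneOn_of_hasDerivWithinAt_nonpos hD
    (fun x hx ↦ (hf x hx).continuousAt.continuousWithinAt)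
    (fun x hx ↦ (hf x (interior_subset hx)).hasDerivWithinAt)
    (fun x hx ↦ hf' x (interior_subset hx))

lemma AntitoneOn.apply_lt_apply_of_hasDerivWithinAt_neg {f : ℝ → ℝ} {f' x y : ℝ}
    (hf : AntitoneOn f (Icc x y)) (hd : HasDerivWithinAt f f' (Ici x) x) (hf' : f' < 0)
    (hxy : x < y) : f y < f x := by
  have hright : ∀ᶠ z in nhdsWithin x (Ioi x), z ∈ Ioo x y :=
    inter_mem_nhdsWithin _ (Iio_mem_nhds hxy)
  obtain ⟨z, hz_slope, hxz, hzy⟩ :=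
    ((hd.liminf_right_slope_le hf').and_eventually hright).exists
  calc f y ≤ f z := hf ⟨hxz.le, hzy.le⟩ ⟨hxy.le, le_rfl⟩ hzy.le
    _ < f x := (slope_neg_iff_of_le hxz.le).1 hz_slope

namespace IsRiccatiSubsolution

variable {c : ℝ} {f f' : ℝ → ℝ} {D : Set ℝ}

lemma mono {E : Set ℝ} (h : IsRiccatiSubsolution c f f' D) (hED : E ⊆ D) :
    IsRiccatiSubsolution c f f' E :=
  fun t ht ↦ h t (hED ht)

lemma antitoneOn (h : IsRiccatiSubsolution c f f' D) (hc : 0 ≤ c) (hD : Convex ℝ D) :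
    AntitoneOn f D :=
  antitoneOn_of_forall_hasDerivAt_nonpos hD (fun t ht ↦ (h t ht).1) fun t ht ↦ by
    nlinarith [(h t ht).2, sq_nonneg (f t)]

lemma monotoneOn_inv_sub_mul (h : IsRiccatiSubsolution c f f' D) (hD : Convex ℝ D)
    (hf : ∀ t ∈ D, f t ≠ 0) : MonotoneOn (fun t ↦ (f t)⁻¹ - c * t) D := by
  refine monotoneOn_of_forall_hasDerivAt_nonneg hD (f' := fun t ↦ -f' t / f t ^ 2 - c)
    (fun t ht ↦ ((h t ht).1.inv (hf t ht)).sub (by simpa using (hasDerivAt_id t).const_mul c))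
    fun t ht ↦ ?_
  have hsq : 0 < f t ^ 2 := by positivity [hf t ht]
  rw [sub_nonneg, le_div_iff₀ hsq]
  linarith [(h t ht).2]

lemma not_forall_neg_Ici {a : ℝ} (h : IsRiccatiSubsolution c f f' (Ici a)) (hc : 0 < c) :
    ¬ ∀ t ∈ Ici a, f t < 0 := by
  intro hneg
  have hmono := h.monotoneOn_inv_sub_mul (convex_Ici a) fun t ht ↦ (hneg t ht).ne
  -- the time at which the lower bound `(f a)⁻¹ + c (T - a)` for `(f T)⁻¹` reaches `0`
  set T := a - (f a)⁻¹ / c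
  have haT : a ≤ T := (le_sub_self_iff a).2 <| div_nonpos_of_nonpos_of_nonneg
    (inv_nonpos.2 (hneg a self_mem_Ici).le) hc.le
  have hcT : c * T = c * a - (f a)⁻¹ := by simp only [T]; field_simp
  have hbound := hmono self_mem_Ici haT haT
  simp only [hcT] at hbound
  linarith [inv_lt_zero.2 (hneg T haT)]

end IsRiccatiSubsolution

theorem generic_condition_blowup_general
    (c : ℝ) (hc : 0 < c)
    (θ θ' : ℝ → ℝ)
    (hθ : ∀ t, 0 ≤ t → HasDerivAt θ (θ' t) t)
    (hineq : ∀ t, 0 ≤ t → θ' t + c * (θ t) ^ 2 ≤ 0)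
    (hθ0 : θ 0 = 0)
    (t₀ : ℝ) (ht₀ : 0 ≤ t₀) (hneg : θ' t₀ < 0) :
    (∀ t, t₀ < t → θ t < 0) ∧ False := by
  have hsol : IsRiccatiSubsolution c θ θ' (Ici 0) := fun t ht ↦ ⟨hθ t ht, hineq t ht⟩
  have hanti := hsol.antitoneOn hc.le (convex_Ici 0)
  have hθneg : ∀ t, t₀ < t → θ t < 0 := fun t ht ↦
    have hIcc : Icc t₀ t ⊆ Ici 0 := fun s hs ↦ ht₀.trans hs.1
    calc θ t < θ t₀ := (hanti.mono hIcc).apply_lt_apply_of_hasDerivWithinAt_neg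
          (hθ t₀ ht₀).hasDerivWithinAt hneg ht
      _ ≤ θ 0 := hanti self_mem_Ici ht₀ ht₀
      _ = 0 := hθ0
  have hsol₁ : IsRiccatiSubsolution c θ θ' (Ici (t₀ + 1)) :=
    hsol.mono (Ici_subset_Ici.2 (by linarith))
  exact ⟨hθneg, hsol₁.not_forall_neg_Ici hc fun t ht ↦ hθneg t (by linarith [mem_Ici.1 ht])⟩

/-- Generic condition argument: if the expansion starts at zero and its
derivative is ever strictly negative, the Raychaudhuri inequality forces
finite-time blow-up, contradicting existence on all of `[0,∞)`. -/
theorem generic_condition_blowup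
    (c : ℝ) (hc : 0 < c)
    (θ θ' : ℝ → ℝ)
    (hθ : ∀ t, 0 ≤ t → HasDerivAt θ (θ' t) t)
    (hθ'cont : ContinuousOn θ' (Set.Ici 0))
    (hineq : ∀ t, 0 ≤ t → θ' t + c * (θ t) ^ 2 ≤ 0)
    (hθ0 : θ 0 = 0)
    (t₀ : ℝ) (ht₀ : 0 ≤ t₀) (hneg : θ' t₀ < 0) :
    (∀ t, t₀ < t → θ t < 0) ∧ False :=
  generic_condition_blowup_general c hc θ θ' hθ hineq hθ0 t₀ ht₀ hneg
end
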